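/- Let V be a commutative ring, I a two-sided ideal of V⟨x_1,...,x_m⟩, and S_1,...,S_k comaximal multiplicative subsets of V. Then f ∈ I if and only if the image of f in (S_i^{-1}V)⟨x_1,...,x_m⟩ lies in S_i^{-1}I for every 1 ≤ i ≤ k. -/

import Mathlib

open MonoidAlgebra

/-- The monoid of noncommutative monomials (words) in `m` variables. -/
abbrev Mon (m : ℕ) := FreeMonoid (Fin m)

/-- An order on monomials is admissible if it is a well-order compatible with
multiplication on both sides, and every word is greater than its proper nonempty subwords. -/
def AdmissibleOrder (m : ℕ) [LinearOrder (Mon m)] : Prop :=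
  WellFoundedLT (Mon m) ∧
  (∀ p q r : Mon m, r ≠ 1 → p < q → p * r < q * r) ∧
  (∀ p q s : Mon m, s ≠ 1 → p < q → s * p < s * q) ∧
  (∀ p q r : Mon m, q ≠ 1 → r ≠ 1 → p = q * r → q < p ∧ r < p)

variable {m : ℕ} {V : Type} [CommRing V] [LinearOrder (Mon m)]

/-- Leading monomial of `f` (junk value `1` for `f = 0`). -/
noncomputable def lmOf (f : MonoidAlgebra V (Mon m)) : Mon m := WithBot.unbotD 1 f.coeff.support.max

/-- Leading coefficient. -/
noncomputable def lcOf (f : MonoidAlgebra V (Mon m)) : V := f.coeff (lmOf f)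

/-- Leading term, as an element of the free algebra. -/
noncomputable def ltOf (f : MonoidAlgebra V (Mon m)) : MonoidAlgebra V (Mon m) :=
  MonoidAlgebra.single (lmOf f) (lcOf f)

/-- `LM(E)`: leading monomials of the nonzero elements of `E`. -/
def lmSet (E : Set (MonoidAlgebra V (Mon m))) : Set (Mon m) :=
  {p | ∃ f ∈ E, f ≠ 0 ∧ lmOf f = p}

/-- `LT(E)`: leading terms of the nonzero elements of `E`. -/
def ltSet (E : Set (MonoidAlgebra V (Mon m))) : Set (MonoidAlgebra V (Mon m)) :=
  {t | ∃ f ∈ E, f ≠ 0 ∧ t = ltOf f}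

/-- `V·LM(E)`: terms whose monomial is a leading monomial of `E`. -/
def vlm (E : Set (MonoidAlgebra V (Mon m))) : Set (MonoidAlgebra V (Mon m)) :=
  {t | ∃ a : V, ∃ p ∈ lmSet E, t = MonoidAlgebra.single p a}

/-- `V·LT(E)`: `V`-multiples of leading terms of nonzero elements of `E`. -/
def vlt (E : Set (MonoidAlgebra V (Mon m))) : Set (MonoidAlgebra V (Mon m)) :=
  {t | ∃ c : V, ∃ f ∈ E, f ≠ 0 ∧ t = c • ltOf f}

/-- The `V`-span `⟨⟨V·LM(E) \ V·LT(E)⟩⟩`. -/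
noncomputable def modB (E : Set (MonoidAlgebra V (Mon m))) :
    Submodule V (MonoidAlgebra V (Mon m)) :=
  Submodule.span V (vlm E \ vlt E)

/-- The `V`-span `⟨⟨NonLM(E)⟩⟩` of monomials that are not leading monomials of `E`. -/
noncomputable def modC (E : Set (MonoidAlgebra V (Mon m))) :
    Submodule V (MonoidAlgebra V (Mon m)) :=
  Submodule.span V {t | ∃ p ∉ lmSet E, t = MonoidAlgebra.single p (1 : V)}

/-- The term `a·p` divides the term `b·q`. -/
def termDvd (a : V) (p : Mon m) (b : V) (q : Mon m) : Prop :=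
  a ∣ b ∧ ∃ u v : Mon m, q = u * p * v

/-- `r` is a remainder of the division of `f` by `G`. -/
def IsRemainder (G : Set (MonoidAlgebra V (Mon m))) (f r : MonoidAlgebra V (Mon m)) : Prop :=
  (∃ n : ℕ, ∃ u v g : Fin n → MonoidAlgebra V (Mon m), (∀ i, g i ∈ G) ∧
      f = (∑ i, u i * g i * v i) + r ∧
      ∀ i, u i * g i * v i = 0 ∨ lmOf (u i * g i * v i) ≤ lmOf f) ∧
  ∀ g ∈ G, g ≠ 0 → ∀ p ∈ r.coeff.support, ¬ termDvd (lcOf g) (lmOf g) (r.coeff p) p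

/-- `O` is an overlap relation of `f` and `g` by `p` and `q`. -/
def IsOverlap (f g : MonoidAlgebra V (Mon m)) (p q : Mon m)
    (O : MonoidAlgebra V (Mon m)) : Prop :=
  (∃ c : V, lcOf g = lcOf f * c ∧
      O = (c • f) * MonoidAlgebra.single p 1 - MonoidAlgebra.single q 1 * g) ∨
  (∃ c : V, lcOf f = lcOf g * c ∧
      O = f * MonoidAlgebra.single p 1 - MonoidAlgebra.single q c * g)

/-- Extension of a ring homomorphism on coefficients to monoid algebras. -/
noncomputable def mapCoeff {k k' : Type} [CommRing k] [CommRing k'] {G : Type} [Monoid G]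
    (φ : k →+* k') : MonoidAlgebra k G →+* MonoidAlgebra k' G :=
  MonoidAlgebra.liftNCRingHom ((MonoidAlgebra.singleOneRingHom).comp φ)
    (MonoidAlgebra.of k' G)
    (by
      intro x y
      show MonoidAlgebra.single (1 : G) (φ x) * MonoidAlgebra.single y 1 =
        MonoidAlgebra.single y 1 * MonoidAlgebra.single (1 : G) (φ x)
      rw [MonoidAlgebra.single_mul_single, MonoidAlgebra.single_mul_single]
      simp)

variable {k k' : Type} [CommRing k] [CommRing k'] {G : Type} [Monoid G] (φ : k →+* k')

lemma mapCoeff_single (g : G) (a : k) :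
    mapCoeff φ (MonoidAlgebra.single g a) = MonoidAlgebra.single g (φ a) := by
  simp [mapCoeff, MonoidAlgebra.liftNCRingHom, MonoidAlgebra.liftNC_single,
    MonoidAlgebra.singleOneRingHom, MonoidAlgebra.of_apply, MonoidAlgebra.single_mul_single]

lemma smul_eq_single_one_mul (c : k) (x : MonoidAlgebra k G) :
    c • x = MonoidAlgebra.single 1 c * x := by
  ext g
  rw [MonoidAlgebra.coeff_single_one_mul]
  exact MonoidAlgebra.coeff_smul_apply c x g

lemma mapCoeff_smul (c : k) (x : MonoidAlgebra k G) :
    mapCoeff φ (c • x) = φ c • mapCoeff φ x := by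
  rw [smul_eq_single_one_mul, map_mul, mapCoeff_single, ← smul_eq_single_one_mul]

lemma mapCoeff_eq_mapRange (x : MonoidAlgebra k G) :
    (mapCoeff φ x).coeff = Finsupp.mapRange φ (map_zero φ) x.coeff := by
  induction x using MonoidAlgebra.induction with
  | zero => simp
  | single_add g a x _ _ ih =>
      rw [map_add, MonoidAlgebra.coeff_add, MonoidAlgebra.coeff_add, ih,
        Finsupp.mapRange_add (map_add φ)]
      congr 1
      rw [mapCoeff_single, MonoidAlgebra.coeff_single, MonoidAlgebra.coeff_single]
      exact (Finsupp.mapRange_single (f := φ) (hf := map_zero φ)).symm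

variable {M : Submonoid k}

/-- Clearing denominators. -/
lemma exists_clear_denom (y : MonoidAlgebra (Localization M) G) :
    ∃ t : M, ∃ u : MonoidAlgebra k G,
      (algebraMap k (Localization M) t) • y = mapCoeff (algebraMap k (Localization M)) u := by
  induction y using MonoidAlgebra.induction with
  | zero => exact ⟨1, 0, by simp⟩
  | single_add g r y _ _ ih =>
      obtain ⟨t, u, ht⟩ := ih
      obtain ⟨⟨a, s⟩, hs⟩ := IsLocalization.surj M r
      refine ⟨s * t, MonoidAlgebra.single g (t * a) + (s : k) • u, ?_⟩
      rw [map_add, mapCoeff_single, mapCoeff_smul, smul_add]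
      have h1 : (algebraMap k (Localization M)) ↑(s * t) •
          (MonoidAlgebra.single g r : MonoidAlgebra (Localization M) G)
          = MonoidAlgebra.single g ((algebraMap k (Localization M)) (t * a)) := by
        rw [MonoidAlgebra.smul_single, smul_eq_mul]
        congr 1
        push_cast [map_mul]
        rw [← hs]
        ring
      have h2 : (algebraMap k (Localization M)) ↑(s * t) • y
          = (algebraMap k (Localization M)) ↑s • mapCoeff (algebraMap k (Localization M)) u := by
        rw [← ht, smul_smul, ← map_mul]
        norm_cast
      rw [h1, h2]

/-- Kernel of the coefficientwise localization map. -/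
lemma exists_annihilator {x : MonoidAlgebra k G}
    (hx : mapCoeff (algebraMap k (Localization M)) x = 0) :
    ∃ t : M, (t : k) • x = 0 := by
  have hcoef : ∀ g : G, ∃ t : M, (t : k) * x.coeff g = 0 := by
    intro g
    have : (algebraMap k (Localization M)) (x.coeff g) = 0 := by
      have h := congrArg (fun z : G →₀ Localization M => z g)
        (mapCoeff_eq_mapRange (algebraMap k (Localization M)) x)
      rw [hx] at h
      simpa [Finsupp.mapRange_apply] using h.symm
    obtain ⟨t, ht⟩ := (IsLocalization.map_eq_zero_iff M (Localization M) (x.coeff g)).mp this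
    exact ⟨t, ht⟩
  choose t ht using hcoef
  refine ⟨∏ g ∈ x.coeff.support, t g, ?_⟩
  ext g
  rw [MonoidAlgebra.coeff_smul_apply, smul_eq_mul, MonoidAlgebra.coeff_zero, Finsupp.coe_zero, Pi.zero_apply]
  by_cases hg : g ∈ x.coeff.support
  · obtain ⟨c, hc⟩ := Finset.dvd_prod_of_mem (fun g => ((t g : k))) hg
    have : ((∏ g ∈ x.coeff.support, t g : M) : k) = ∏ g ∈ x.coeff.support, (t g : k) := by push_cast; rfl
    rw [this, hc, mul_comm (t g : k) c, mul_assoc, ht g, mul_zero]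
  · rw [Finsupp.notMem_support_iff.mp hg, mul_zero]

section Main

variable {k m : ℕ} {V : Type} [CommRing V]

private lemma smul_mem_tsi (I : TwoSidedIdeal (MonoidAlgebra V (Mon m))) (c : V)
    {h : MonoidAlgebra V (Mon m)} (hh : h ∈ I) : c • h ∈ I := by
  rw [smul_eq_single_one_mul]
  exact I.mul_mem_left _ _ hh

end Main

/-- Local–global principle: for a two-sided ideal `I` of `V⟨x_1,…,x_m⟩` and comaximal
multiplicative subsets `S_1,…,S_k` of `V`, an element `f` lies in `I` iff for every `i`
the image of `f` in `(S_i^{-1}V)⟨x_1,…,x_m⟩` lies in the extension `S_i^{-1}I`. -/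
theorem local_global_membership {k m : ℕ} {V : Type} [CommRing V]
    (S : Fin k → Submonoid V)
    (hcom : ∀ s : Fin k → V, (∀ i, s i ∈ S i) → ∃ v : Fin k → V, ∑ i, v i * s i = 1)
    (I : TwoSidedIdeal (MonoidAlgebra V (Mon m)))
    (f : MonoidAlgebra V (Mon m)) :
    f ∈ I ↔ ∀ i : Fin k,
      mapCoeff (algebraMap V (Localization (S i))) f ∈
        TwoSidedIdeal.span
          (mapCoeff (algebraMap V (Localization (S i))) ''
            (I : Set (MonoidAlgebra V (Mon m)))) := by
  constructor
  · intro hf i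
    exact TwoSidedIdeal.subset_span ⟨f, hf, rfl⟩
  · intro h
    have key : ∀ i : Fin k, ∃ w : V, w ∈ S i ∧ w • f ∈ I := by
      intro i
      set φ := algebraMap V (Localization (S i)) with hφ
      set D : Set (MonoidAlgebra (Localization (S i)) (Mon m)) :=
        {x | ∃ s : S i, ∃ h₀ ∈ I, φ (s : V) • x = mapCoeff φ h₀} with hD
      set J : TwoSidedIdeal (MonoidAlgebra (Localization (S i)) (Mon m)) :=
        TwoSidedIdeal.mk' D
          ⟨1, 0, I.zero_mem, by simp⟩
          (by
            rintro x y ⟨s1, h1, hh1, he1⟩ ⟨s2, h2, hh2, he2⟩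
            refine ⟨s1 * s2, (s2 : V) • h1 + (s1 : V) • h2,
              I.add_mem (smul_mem_tsi I _ hh1) (smul_mem_tsi I _ hh2), ?_⟩
            rw [map_add, mapCoeff_smul, mapCoeff_smul, ← he1, ← he2, smul_add]
            push_cast [map_mul]
            rw [smul_smul, smul_smul, mul_comm (φ (s2 : V)) (φ (s1 : V))]
          )
          (by
            rintro x ⟨s1, h1, hh1, he1⟩
            exact ⟨s1, -h1, I.neg_mem hh1, by rw [map_neg, ← he1, smul_neg]⟩)
          (by
            rintro y x ⟨s1, h1, hh1, he1⟩
            obtain ⟨t, u, htu⟩ := exists_clear_denom y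
            rw [← hφ] at htu
            refine ⟨t * s1, u * h1, I.mul_mem_left _ _ hh1, ?_⟩
            push_cast [map_mul]
            rw [← smul_smul, ← mul_smul_comm, ← smul_mul_assoc, htu, he1]
          )
          (by
            rintro x y ⟨s1, h1, hh1, he1⟩
            obtain ⟨t, u, htu⟩ := exists_clear_denom y
            rw [← hφ] at htu
            refine ⟨s1 * t, h1 * u, I.mul_mem_right _ _ hh1, ?_⟩
            push_cast [map_mul]
            rw [← smul_smul, ← mul_smul_comm, ← smul_mul_assoc, htu, he1]
          ) with hJ
      have hsub : mapCoeff φ '' (I : Set (MonoidAlgebra V (Mon m))) ⊆ (J : Set _) := by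
        rintro _ ⟨g, hg, rfl⟩
        rw [hJ, TwoSidedIdeal.coe_mk']
        exact ⟨1, g, hg, by simp⟩
      have hfJ : mapCoeff φ f ∈ J := TwoSidedIdeal.mem_span_iff.mp (h i) J hsub
      rw [hJ, TwoSidedIdeal.mem_mk'] at hfJ
      obtain ⟨s, h₀, hh₀, heq⟩ := hfJ
      have hker : mapCoeff φ ((s : V) • f - h₀) = 0 := by
        rw [map_sub, mapCoeff_smul, heq, sub_self]
      obtain ⟨t, ht⟩ := exists_annihilator hker
      refine ⟨(t : V) * (s : V), (S i).mul_mem t.2 s.2, ?_⟩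
      rw [smul_sub] at ht
      have : ((t : V) * (s : V)) • f = (t : V) • h₀ := by
        rw [mul_smul]
        exact sub_eq_zero.mp ht
      rw [this]
      exact smul_mem_tsi I _ hh₀
    choose w hw hwf using key
    have hv := hcom w hw
    obtain ⟨v, hv⟩ := hv
    have : f = ∑ i, (v i * w i) • f := by
      rw [← Finset.sum_smul, hv, one_smul]
    rw [this]
    exact sum_mem fun i _ => by rw [mul_smul]; exact smul_mem_tsi I _ (hwf i)
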